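/- Let C_0 ⊆ F_2^n (n > 2) be a binary code with minimum weight at least 4, and C = Span{d(E_n), e(C_0)} ⊆ F_2^{2n}. Then every automorphism of C (coordinate permutation preserving C) preserves the subcode d(E_n), provided the minimum weight of C_0 is strictly greater than 4. -/

import Mathlib

/-- Hamming weight of a binary word. -/
def wt {n : ℕ} (v : Fin n → ZMod 2) : ℕ :=
  (Finset.univ.filter (fun i => v i ≠ 0)).card

/-- Size of the intersection of the supports of two binary words. -/
def interCard {n : ℕ} (v w : Fin n → ZMod 2) : ℕ :=
  (Finset.univ.filter (fun i => v i ≠ 0 ∧ w i ≠ 0)).card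

/-- The doubling map `d : F₂ⁿ → F₂^{2n}`, `(c₁,…,cₙ) ↦ (c₁,c₁,c₂,c₂,…,cₙ,cₙ)`. -/
def dbl {n : ℕ} (c : Fin n → ZMod 2) : Fin (2 * n) → ZMod 2 :=
  fun i => c ⟨(i : ℕ) / 2, by have := i.isLt; omega⟩

/-- The map `e : F₂ⁿ → F₂^{2n}`, `(c₁,…,cₙ) ↦ (0,c₁,0,c₂,…,0,cₙ)`. -/
def emap {n : ℕ} (c : Fin n → ZMod 2) : Fin (2 * n) → ZMod 2 :=
  fun i => if (i : ℕ) % 2 = 1 then c ⟨(i : ℕ) / 2, by have := i.isLt; omega⟩ else 0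

/-- The even-weight code `𝓔ₙ ⊆ F₂ⁿ`. -/
def evenCode (n : ℕ) : Set (Fin n → ZMod 2) := {c | Even (wt c)}

/-!
Write `D = d(Eₙ)` and `C = D + e(C₀)`. A word `d(a) + e(b)` of `C` has weight at least `wt b`,
so when `C₀` has minimum weight above 4 the words of weight at most 4 in `C` all lie in `D`. The
even-weight code is spanned by its weight-two words, hence `D` is spanned by words of weight 4. A
coordinate permutation preserving `C` preserves weights, so it sends these generators into `D`,
and by linearity it sends all of `D` into `D`.
-/

lemma wt_comp_equiv {m n : ℕ} (v : Fin n → ZMod 2) (e : Fin m ≃ Fin n) : wt (v ∘ e) = wt v :=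
  Finset.card_equiv e (by simp)

lemma natCast_wt {n : ℕ} (c : Fin n → ZMod 2) : (wt c : ZMod 2) = ∑ i, c i := by
  have hone : ∀ i ∈ Finset.univ.filter (fun i => c i ≠ 0), c i = 1 := by
    intro i hi
    have : ∀ x : ZMod 2, x ≠ 0 → x = 1 := by decide
    exact this _ (Finset.mem_filter.1 hi).2
  rw [← Finset.sum_filter_ne_zero, Finset.sum_congr rfl hone, Finset.sum_const, nsmul_one, wt]

lemma mem_evenCode_iff {n : ℕ} {c : Fin n → ZMod 2} : c ∈ evenCode n ↔ ∑ i, c i = 0 := by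
  rw [← natCast_wt, ZMod.natCast_eq_zero_iff, ← even_iff_two_dvd]
  rfl

lemma wt_single_sub_single {n : ℕ} {i j : Fin n} (hij : i ≠ j) :
    wt (Pi.single i 1 - Pi.single j 1 : Fin n → ZMod 2) = 2 := by
  have : Finset.univ.filter (fun k => (Pi.single i 1 - Pi.single j 1 : Fin n → ZMod 2) k ≠ 0)
      = {i, j} := by
    ext k
    by_cases hki : k = i <;> by_cases hkj : k = j <;> simp_all [Pi.single_apply]
  rw [wt, this, Finset.card_pair hij]

def evenSubmodule (n : ℕ) : Submodule (ZMod 2) (Fin n → ZMod 2) where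
  carrier := evenCode n
  add_mem' ha hb := by
    rw [mem_evenCode_iff] at *
    simp [Finset.sum_add_distrib, ha, hb]
  zero_mem' := by simp [mem_evenCode_iff]
  smul_mem' c a ha := by
    rw [mem_evenCode_iff] at *
    simp [← Finset.mul_sum, ha]

lemma evenSubmodule_le_span_wt_eq_two (n : ℕ) :
    evenSubmodule n ≤ Submodule.span (ZMod 2) {g | wt g = 2} := by
  intro a ha
  rcases eq_or_ne a 0 with rfl | ha0
  · exact Submodule.zero_mem _
  obtain ⟨i₀, -⟩ := Function.ne_iff.1 ha0
  have hsum : ∑ i, a i = 0 := mem_evenCode_iff.1 ha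
  have hdecomp : a = ∑ i, a i • (Pi.single i 1 - Pi.single i₀ 1) := by
    simp only [smul_sub, Finset.sum_sub_distrib, ← Finset.sum_smul, hsum, zero_smul, sub_zero]
    exact pi_eq_sum_univ' a
  rw [hdecomp]
  refine Submodule.sum_mem _ fun i _ => Submodule.smul_mem _ _ ?_
  rcases eq_or_ne i i₀ with rfl | hi
  · rw [sub_self]
    exact Submodule.zero_mem _
  · exact Submodule.subset_span (wt_single_sub_single hi)

def pairEquiv (n : ℕ) : Fin n × Fin 2 ≃ Fin (2 * n) :=
  finProdFinEquiv.trans (finCongr (mul_comm n 2))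

lemma val_pairEquiv {n : ℕ} (p : Fin n × Fin 2) : (pairEquiv n p : ℕ) = p.2 + 2 * p.1 := rfl

lemma dbl_pairEquiv {n : ℕ} (c : Fin n → ZMod 2) (p : Fin n × Fin 2) :
    dbl c (pairEquiv n p) = c p.1 := by
  refine congrArg c (Fin.ext ?_)
  simp [val_pairEquiv, Nat.add_mul_div_left, Nat.div_eq_of_lt p.2.isLt]

lemma emap_pairEquiv {n : ℕ} (c : Fin n → ZMod 2) (p : Fin n × Fin 2) :
    emap c (pairEquiv n p) = if p.2 = 1 then c p.1 else 0 := by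
  obtain ⟨j, t⟩ := p
  fin_cases t <;> simp [emap, val_pairEquiv, Nat.add_mul_div_left]

lemma wt_eq_card_pairEquiv {n : ℕ} (v : Fin (2 * n) → ZMod 2) :
    wt v = (Finset.univ.filter fun p => v (pairEquiv n p) ≠ 0).card :=
  (Finset.card_equiv (pairEquiv n).symm (by simp)).trans rfl

lemma wt_dbl {n : ℕ} (a : Fin n → ZMod 2) : wt (dbl a) = 2 * wt a := by
  rw [wt_eq_card_pairEquiv]
  simp only [dbl_pairEquiv, ← Finset.univ_product_univ]
  rw [Finset.filter_product_left (fun i => a i ≠ 0), Finset.card_product, Finset.card_univ,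
    Fintype.card_fin, wt, mul_comm]

lemma wt_le_wt_dbl_add_emap {n : ℕ} (a b : Fin n → ZMod 2) : wt b ≤ wt (dbl a + emap b) := by
  rw [wt_eq_card_pairEquiv]
  -- over `j` the word `dbl a + emap b` reads `(a j, a j + b j)`
  refine (Finset.card_le_card fun j hj => ?_).trans (Finset.card_image_le (f := Prod.fst))
  simp only [Finset.mem_filter, Finset.mem_univ, true_and, Finset.mem_image] at hj ⊢
  by_cases ha : a j = 0
  · exact ⟨(j, 1), by simp [dbl_pairEquiv, emap_pairEquiv, ha, hj], rfl⟩
  · exact ⟨(j, 0), by simp [dbl_pairEquiv, emap_pairEquiv, ha], rfl⟩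

def dblLinearMap (n : ℕ) : (Fin n → ZMod 2) →ₗ[ZMod 2] (Fin (2 * n) → ZMod 2) where
  toFun := dbl
  map_add' _ _ := rfl
  map_smul' _ _ := rfl

def emapLinearMap (n : ℕ) : (Fin n → ZMod 2) →ₗ[ZMod 2] (Fin (2 * n) → ZMod 2) where
  toFun := emap
  map_add' a b := by
    funext i
    simp only [emap, Pi.add_apply]
    split_ifs <;> simp
  map_smul' c a := by
    funext i
    simp only [emap, Pi.smul_apply, RingHom.id_apply]
    split_ifs <;> simp

def dblEven (n : ℕ) : Submodule (ZMod 2) (Fin (2 * n) → ZMod 2) :=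
  (evenSubmodule n).map (dblLinearMap n)

lemma coe_dblEven (n : ℕ) : (dblEven n : Set (Fin (2 * n) → ZMod 2)) = dbl '' evenCode n :=
  Submodule.map_coe _ _

lemma span_dbl_union_emap (n : ℕ) (C₀ : Submodule (ZMod 2) (Fin n → ZMod 2)) :
    Submodule.span (ZMod 2) (dbl '' evenCode n ∪ emap '' C₀) =
      dblEven n ⊔ C₀.map (emapLinearMap n) := by
  rw [Submodule.span_union, ← coe_dblEven, Submodule.span_eq]
  exact congrArg _ ((Submodule.span_image (emapLinearMap n)).trans (by rw [Submodule.span_eq]))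

lemma mem_dblEven_of_wt_le {n k : ℕ} {C₀ : Submodule (ZMod 2) (Fin n → ZMod 2)}
    (hmin : ∀ y ∈ C₀, y ≠ 0 → k < wt y) {w : Fin (2 * n) → ZMod 2}
    (hw : w ∈ dblEven n ⊔ C₀.map (emapLinearMap n)) (hwt : wt w ≤ k) : w ∈ dblEven n := by
  obtain ⟨_, ⟨a, ha, rfl⟩, _, ⟨b, hb, rfl⟩, rfl⟩ := Submodule.mem_sup.1 hw
  obtain rfl : b = 0 := by
    by_contra hb0
    exact (hmin b hb hb0).not_ge ((wt_le_wt_dbl_add_emap a b).trans hwt)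
  rw [map_zero, add_zero]
  exact Submodule.mem_map_of_mem ha

lemma dblEven_le_span_dbl_wt_eq_two (n : ℕ) :
    dblEven n ≤ Submodule.span (ZMod 2) (dbl '' {g | wt g = 2}) := by
  rw [show dbl = dblLinearMap n from rfl, Submodule.span_image]
  exact Submodule.map_mono (evenSubmodule_le_span_wt_eq_two n)

theorem aut_preserves_dblEven_general (n : ℕ)
    (C₀ : Submodule (ZMod 2) (Fin n → ZMod 2))
    (hmin : ∀ y ∈ C₀, y ≠ 0 → 4 < wt y) :
    ∀ σ : Equiv.Perm (Fin (2 * n)),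
      (∀ v : Fin (2 * n) → ZMod 2,
        v ∈ Submodule.span (ZMod 2) (dbl '' evenCode n ∪ emap '' C₀) ↔
        v ∘ σ ∈ Submodule.span (ZMod 2) (dbl '' evenCode n ∪ emap '' C₀)) →
      ∀ v ∈ dbl '' evenCode n, v ∘ σ ∈ dbl '' evenCode n := by
  intro σ hσ v hv
  rw [← coe_dblEven] at hv ⊢
  have hgen : ∀ g, wt g = 2 → dbl g ∘ σ ∈ dblEven n := fun g hg => by
    have hgC : dbl g ∈ Submodule.span (ZMod 2) (dbl '' evenCode n ∪ emap '' C₀) :=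
      Submodule.subset_span (Or.inl ⟨g, by simp [evenCode, hg], rfl⟩)
    refine mem_dblEven_of_wt_le hmin ?_ ?_
    · rw [← span_dbl_union_emap]
      exact (hσ _).1 hgC
    · rw [wt_comp_equiv, wt_dbl, hg]
  have hle : dblEven n ≤ (dblEven n).comap (LinearMap.funLeft (ZMod 2) (ZMod 2) σ) :=
    (dblEven_le_span_dbl_wt_eq_two n).trans
      (Submodule.span_le.2 (by rintro _ ⟨g, hg, rfl⟩; exact hgen g hg))
  exact hle hv

/-- for `n > 2` and a binary code `C₀ ⊆ F₂ⁿ` of minimum weight strictly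
greater than 4, every automorphism of `C = Span{d(𝓔ₙ), e(C₀)}` preserves the subcode
`d(𝓔ₙ)`. -/
theorem aut_preserves_dblEven (n : ℕ) (hn : 2 < n)
    (C₀ : Submodule (ZMod 2) (Fin n → ZMod 2))
    (hmin : ∀ y ∈ C₀, y ≠ 0 → 4 < wt y) :
    ∀ σ : Equiv.Perm (Fin (2 * n)),
      (∀ v : Fin (2 * n) → ZMod 2,
        v ∈ Submodule.span (ZMod 2) (dbl '' evenCode n ∪ emap '' C₀) ↔
        v ∘ σ ∈ Submodule.span (ZMod 2) (dbl '' evenCode n ∪ emap '' C₀)) →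
      ∀ v ∈ dbl '' evenCode n, v ∘ σ ∈ dbl '' evenCode n :=
  aut_preserves_dblEven_general n C₀ hmin
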